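/- arXiv:2306.09840 — 7 statements merged into one kernel-verified Lean document; each statement's English description precedes it below -/
import Mathlib

section
/- Let ℓ : ℝⁿ → ℝ₊ be continuous, positive-definite (ℓ(x)=0 ↔ x=0), symmetric (ℓ(-x)=ℓ(x)), and satisfy the generalized homogeneity property: there exists a class-K∞ function f such that ℓ(x) ≥ f(1/|r|)·ℓ(r·x) for all x ∈ ℝⁿ and all nonzero reals r. Then for any norm ‖·‖ on ℝⁿ there exist class-K∞ functions ξ₁, ξ₂ with ξ₁(‖θ‖) ≤ ℓ(θ) ≤ ξ₂(‖θ‖) for all θ ∈ ℝⁿ. -/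
/-! By compactness, `ℓ` lies between positive constants `m ≤ M` on the unit sphere of the sup
norm. Generalized homogeneity, applied with `r = ‖θ‖⁻¹` and with `r = ‖θ‖`, transports this to
`m f(‖θ‖) ≤ ℓ θ ≤ M / f(‖θ‖⁻¹)`, and `s ↦ 1 / f(1/s)` is again of class K∞. Any norm `N` on `ℝⁿ`
is equivalent to the sup norm, `c ‖θ‖ ≤ N θ ≤ K ‖θ‖`, so rescaling the arguments by `c` and `K`
gives `ξ₁` and `ξ₂`. -/

open Finset Filter

/-- A class-K∞ function: continuous on [0,∞), zero at zero, strictly increasing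
on [0,∞), and tending to ∞ at ∞. -/
def ClassKInf (f : ℝ → ℝ) : Prop :=
  ContinuousOn f (Set.Ici 0) ∧ f 0 = 0 ∧ StrictMonoOn f (Set.Ici 0) ∧
    Tendsto f atTop atTop

/-- Dot product on ℝⁿ. -/
def dot {n : ℕ} (x θ : Fin n → ℝ) : ℝ := ∑ i, x i * θ i

/-- `N` is a norm on ℝⁿ. -/
def IsNorm {n : ℕ} (N : (Fin n → ℝ) → ℝ) : Prop :=
  (∀ x, 0 ≤ N x) ∧ (∀ x, N x = 0 ↔ x = 0) ∧
    (∀ (a : ℝ) (x), N (a • x) = |a| * N x) ∧ (∀ x y, N (x + y) ≤ N x + N y)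

open Topology

namespace ClassKInf

variable {f : ℝ → ℝ}

lemma pos (hf : ClassKInf f) {t : ℝ} (ht : 0 < t) : 0 < f t := by
  simpa only [hf.2.1] using hf.2.2.1 Set.self_mem_Ici (Set.mem_Ici.mpr ht.le) ht

lemma tendsto_nhdsGT_zero (hf : ClassKInf f) : Tendsto f (𝓝[>] 0) (𝓝[>] 0) := by
  refine tendsto_nhdsWithin_iff.mpr ⟨?_, eventually_nhdsWithin_of_forall fun t ht => hf.pos ht⟩
  have h := hf.1.continuousWithinAt Set.self_mem_Ici
  rw [ContinuousWithinAt, hf.2.1] at h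
  exact h.mono_left (nhdsWithin_mono _ Set.Ioi_subset_Ici_self)

lemma const_mul_comp_mul (hf : ClassKInf f) {m a : ℝ} (hm : 0 < m) (ha : 0 < a) :
    ClassKInf (fun s => m * f (a * s)) := by
  have hmaps : Set.MapsTo (a * ·) (Set.Ici 0) (Set.Ici 0) := fun s hs =>
    Set.mem_Ici.mpr (mul_nonneg ha.le hs)
  refine ⟨continuousOn_const.mul (hf.1.comp (continuous_const_mul a).continuousOn hmaps),
    by simp [hf.2.1], fun s hs t ht hst => ?_,
    (hf.2.2.2.comp (tendsto_id.const_mul_atTop ha)).const_mul_atTop hm⟩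
  exact mul_lt_mul_of_pos_left
    (hf.2.2.1 (hmaps hs) (hmaps ht) (mul_lt_mul_of_pos_left hst ha)) hm

/-- The junk value `0⁻¹ = 0` makes the formula right at `s = 0`. -/
lemma inv_comp_inv (hf : ClassKInf f) : ClassKInf (fun s => (f s⁻¹)⁻¹) := by
  refine ⟨fun s hs => ?_, by simp [hf.2.1], fun s hs t _ hst => ?_, ?_⟩
  · rcases (Set.mem_Ici.mp hs).eq_or_lt with rfl | hs
    · rw [← continuousWithinAt_Ioi_iff_Ici, ContinuousWithinAt, inv_zero, hf.2.1, inv_zero]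
      exact (hf.2.2.2.comp tendsto_inv_nhdsGT_zero).inv_tendsto_atTop
    · have hfs : ContinuousAt f s⁻¹ := hf.1.continuousAt (Ici_mem_nhds (inv_pos.mpr hs))
      exact ((hfs.comp (continuousAt_inv₀ hs.ne')).inv₀
        (hf.pos (inv_pos.mpr hs)).ne').continuousWithinAt
  · have ht : 0 < t := (Set.mem_Ici.mp hs).trans_lt hst
    rcases (Set.mem_Ici.mp hs).eq_or_lt with rfl | hs
    · simpa [hf.2.1] using hf.pos (inv_pos.mpr ht)
    · refine inv_strictAnti₀ (hf.pos (inv_pos.mpr ht)) (hf.2.2.1 ?_ ?_ (inv_strictAnti₀ hs hst))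
      · exact Set.mem_Ici.mpr (inv_pos.mpr ht).le
      · exact Set.mem_Ici.mpr (inv_pos.mpr hs).le
  · exact (hf.tendsto_nhdsGT_zero.comp tendsto_inv_atTop_nhdsGT_zero).inv_tendsto_nhdsGT_zero

end ClassKInf

section UnitSphere

variable {E : Type*} [NormedAddCommGroup E] [ProperSpace E] {g : E → ℝ}

lemma exists_pos_le_of_norm_eq_one (hg : Continuous g) (hpos : ∀ x ≠ 0, 0 < g x) :
    ∃ m > 0, ∀ u : E, ‖u‖ = 1 → m ≤ g u := by
  by_cases hS : (Metric.sphere (0 : E) 1).Nonempty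
  · obtain ⟨u₀, hu₀, hmin⟩ := (isCompact_sphere (0 : E) 1).exists_isMinOn hS hg.continuousOn
    have hu₀ : ‖u₀‖ = 1 := by simpa using hu₀
    exact ⟨g u₀, hpos u₀ (ne_zero_of_norm_ne_zero (by simp [hu₀])),
      fun u hu => hmin (by simpa using hu)⟩
  · exact ⟨1, one_pos, fun u hu => absurd ⟨u, by simpa using hu⟩ hS⟩

lemma exists_le_of_norm_eq_one (hg : Continuous g) :
    ∃ M > 0, ∀ u : E, ‖u‖ = 1 → g u ≤ M := by
  obtain ⟨C, hC⟩ := (isCompact_sphere (0 : E) 1).exists_bound_of_continuousOn hg.continuousOn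
  refine ⟨max C 1, by positivity, fun u hu => ?_⟩
  exact (le_abs_self _).trans ((hC u (by simpa using hu)).trans (le_max_left _ _))

end UnitSphere

namespace IsNorm

variable {n : ℕ} {N : (Fin n → ℝ) → ℝ}

lemma exists_pos_le_mul_norm (hN : IsNorm N) : ∃ K > 0, ∀ x, N x ≤ K * ‖x‖ := by
  classical
  set e : Fin n → Fin n → ℝ := fun i j => if i = j then 1 else 0
  have hsum : 0 ≤ ∑ i, N (e i) := sum_nonneg fun i _ => hN.1 _
  refine ⟨∑ i, N (e i) + 1, by positivity, fun x => ?_⟩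
  calc N x = N (∑ i, x i • e i) := by rw [← pi_eq_sum_univ x]
    _ ≤ ∑ i, N (x i • e i) := le_sum_of_subadditive N ((hN.2.1 0).mpr rfl).le hN.2.2.2 _ _
    _ = ∑ i, |x i| * N (e i) := by simp only [hN.2.2.1]
    _ ≤ ∑ i, ‖x‖ * N (e i) :=
      sum_le_sum fun i _ => mul_le_mul_of_nonneg_right (norm_le_pi_norm x i) (hN.1 _)
    _ ≤ (∑ i, N (e i) + 1) * ‖x‖ := by rw [← mul_sum]; nlinarith [norm_nonneg x]

lemma continuous (hN : IsNorm N) : Continuous N := by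
  obtain ⟨K, -, hK⟩ := hN.exists_pos_le_mul_norm
  refine (LipschitzWith.of_le_add_mul' K fun x y => ?_).continuous
  calc N x = N (y + (x - y)) := by rw [add_sub_cancel]
    _ ≤ N y + N (x - y) := hN.2.2.2 _ _
    _ ≤ N y + K * dist x y := by rw [dist_eq_norm]; gcongr; exact hK _

lemma exists_pos_mul_norm_le (hN : IsNorm N) : ∃ c > 0, ∀ x, c * ‖x‖ ≤ N x := by
  obtain ⟨c, hc, hcN⟩ := exists_pos_le_of_norm_eq_one hN.continuous
    fun x hx => (hN.1 x).lt_of_ne' ((hN.2.1 x).not.mpr hx)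
  refine ⟨c, hc, fun x => ?_⟩
  rcases eq_or_ne x 0 with rfl | hx
  · simpa using hN.1 0
  · have hcx := hcN (‖x‖⁻¹ • x) (norm_smul_inv_norm hx)
    rw [hN.2.2.1, abs_inv, abs_norm] at hcx
    rwa [le_inv_mul_iff₀ (norm_pos_iff.mpr hx), mul_comm] at hcx

end IsNorm

def GenHomogeneous {E : Type*} [SMul ℝ E] (f : ℝ → ℝ) (ℓ : E → ℝ) : Prop :=
  ∀ (x : E) (r : ℝ), r ≠ 0 → f (1 / |r|) * ℓ (r • x) ≤ ℓ x

namespace GenHomogeneous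

variable {E : Type*} [NormedAddCommGroup E] [NormedSpace ℝ E] {f : ℝ → ℝ} {ℓ : E → ℝ}

lemma mul_apply_norm_le (h : GenHomogeneous f ℓ) (hf : ClassKInf f) (hℓ0 : ℓ 0 = 0) {m : ℝ}
    (hm : ∀ u : E, ‖u‖ = 1 → m ≤ ℓ u) (θ : E) : m * f ‖θ‖ ≤ ℓ θ := by
  rcases eq_or_ne θ 0 with rfl | hθ
  · simp [hf.2.1, hℓ0]
  · have key := h θ ‖θ‖⁻¹ (inv_ne_zero (norm_ne_zero_iff.mpr hθ))
    rw [abs_inv, abs_norm, one_div, inv_inv] at key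
    calc m * f ‖θ‖ ≤ f ‖θ‖ * ℓ (‖θ‖⁻¹ • θ) := by
          rw [mul_comm]
          exact mul_le_mul_of_nonneg_left (hm (‖θ‖⁻¹ • θ) (norm_smul_inv_norm hθ))
            (hf.pos (norm_pos_iff.mpr hθ)).le
      _ ≤ ℓ θ := key

lemma le_mul_inv_apply_inv_norm (h : GenHomogeneous f ℓ) (hf : ClassKInf f) (hℓ0 : ℓ 0 = 0)
    {M : ℝ} (hM : ∀ u : E, ‖u‖ = 1 → ℓ u ≤ M) (θ : E) : ℓ θ ≤ M * (f ‖θ‖⁻¹)⁻¹ := by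
  rcases eq_or_ne θ 0 with rfl | hθ
  · simp [hf.2.1, hℓ0]
  · have hθ' := norm_pos_iff.mpr hθ
    have key := h (‖θ‖⁻¹ • θ) ‖θ‖ hθ'.ne'
    rw [abs_norm, one_div, smul_inv_smul₀ hθ'.ne'] at key
    rw [← div_eq_mul_inv, le_div_iff₀ (hf.pos (inv_pos.mpr hθ')), mul_comm]
    exact key.trans (hM (‖θ‖⁻¹ • θ) (norm_smul_inv_norm hθ))

end GenHomogeneous

theorem stmt_0_general {n : ℕ} (ℓ : (Fin n → ℝ) → ℝ) (f : ℝ → ℝ)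
    (hcont : Continuous ℓ) (hnn : ∀ x, 0 ≤ ℓ x)
    (hpd : ∀ x, ℓ x = 0 ↔ x = 0)
    (hf : ClassKInf f)
    (hGH : ∀ (x : Fin n → ℝ) (r : ℝ), r ≠ 0 → f (1 / |r|) * ℓ (r • x) ≤ ℓ x)
    (N : (Fin n → ℝ) → ℝ) (hN : IsNorm N) :
    ∃ ξ₁ ξ₂ : ℝ → ℝ, ClassKInf ξ₁ ∧ ClassKInf ξ₂ ∧
      ∀ θ : Fin n → ℝ, ξ₁ (N θ) ≤ ℓ θ ∧ ℓ θ ≤ ξ₂ (N θ) := by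
  obtain ⟨m, hm, hmℓ⟩ := exists_pos_le_of_norm_eq_one hcont
    fun x hx => (hnn x).lt_of_ne' ((hpd x).not.mpr hx)
  obtain ⟨M, hM, hMℓ⟩ := exists_le_of_norm_eq_one hcont
  obtain ⟨c, hc, hcN⟩ := hN.exists_pos_mul_norm_le
  obtain ⟨K, hK, hKN⟩ := hN.exists_pos_le_mul_norm
  have hℓ0 : ℓ 0 = 0 := (hpd 0).mpr rfl
  have hg := hf.inv_comp_inv
  refine ⟨_, _, hf.const_mul_comp_mul hm (inv_pos.mpr hK),
    hg.const_mul_comp_mul hM (inv_pos.mpr hc), fun θ => ⟨?_, ?_⟩⟩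
  · calc m * f (K⁻¹ * N θ) ≤ m * f ‖θ‖ := by
          refine mul_le_mul_of_nonneg_left (hf.2.2.1.monotoneOn ?_ (norm_nonneg θ) ?_) hm.le
          · exact mul_nonneg (inv_nonneg.mpr hK.le) (hN.1 θ)
          · exact (inv_mul_le_iff₀ hK).mpr (hKN θ)
      _ ≤ ℓ θ := GenHomogeneous.mul_apply_norm_le hGH hf hℓ0 hmℓ θ
  · calc ℓ θ ≤ M * (f ‖θ‖⁻¹)⁻¹ := GenHomogeneous.le_mul_inv_apply_inv_norm hGH hf hℓ0 hMℓ θ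
      _ ≤ M * (f (c⁻¹ * N θ)⁻¹)⁻¹ := by
          refine mul_le_mul_of_nonneg_left (hg.2.2.1.monotoneOn (norm_nonneg θ) ?_ ?_) hM.le
          · exact mul_nonneg (inv_nonneg.mpr hc.le) (hN.1 θ)
          · exact (le_inv_mul_iff₀ hc).mpr (hcN θ)

/-- A continuous, positive-definite, symmetric function satisfying
generalized homogeneity is sandwiched between two class-K∞ functions of any norm. -/
theorem stmt_0 {n : ℕ} (ℓ : (Fin n → ℝ) → ℝ) (f : ℝ → ℝ)
    (hcont : Continuous ℓ) (hnn : ∀ x, 0 ≤ ℓ x)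
    (hpd : ∀ x, ℓ x = 0 ↔ x = 0) (hsym : ∀ x, ℓ (-x) = ℓ x)
    (hf : ClassKInf f)
    (hGH : ∀ (x : Fin n → ℝ) (r : ℝ), r ≠ 0 → f (1 / |r|) * ℓ (r • x) ≤ ℓ x)
    (N : (Fin n → ℝ) → ℝ) (hN : IsNorm N) :
    ∃ ξ₁ ξ₂ : ℝ → ℝ, ClassKInf ξ₁ ∧ ClassKInf ξ₂ ∧
      ∀ θ : Fin n → ℝ, ξ₁ (N θ) ≤ ℓ θ ∧ ℓ θ ≤ ξ₂ (N θ) :=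
  stmt_0_general ℓ f hcont hnn hpd hf hGH N hN
end

section
/- Under the hypotheses of the generalized-homogeneity sandwich lemma, the explicit choices ξ₁(r) = D₁·f(r) and ξ₂(r) = D₂/f(1/r) for r > 0 (with ξ₂(0)=0), where D₁ = min_{‖θ‖=1} ℓ(θ) and D₂ = max_{‖θ‖=1} ℓ(θ), satisfy D₁ > 0, D₂ > 0 and ξ₁(‖θ‖) ≤ ℓ(θ) ≤ ξ₂(‖θ‖) for all θ ∈ ℝⁿ. -/
open Finset Filter

/-- the explicit choices ξ₁(r) = D₁·f(r), ξ₂(r) = D₂/f(1/r) (ξ₂(0)=0),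
with D₁ = min_{‖θ‖=1} ℓ(θ), D₂ = max_{‖θ‖=1} ℓ(θ), give the sandwich bounds. -/
theorem stmt_1 {n : ℕ} (ℓ : (Fin n → ℝ) → ℝ) (f : ℝ → ℝ)
    (hcont : Continuous ℓ) (hnn : ∀ x, 0 ≤ ℓ x)
    (hpd : ∀ x, ℓ x = 0 ↔ x = 0) (hsym : ∀ x, ℓ (-x) = ℓ x)
    (hf : ClassKInf f)
    (hGH : ∀ (x : Fin n → ℝ) (r : ℝ), r ≠ 0 → f (1 / |r|) * ℓ (r • x) ≤ ℓ x)
    (N : (Fin n → ℝ) → ℝ) (hN : IsNorm N)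
    (D₁ D₂ : ℝ)
    (hD₁ : IsLeast (ℓ '' {θ | N θ = 1}) D₁)
    (hD₂ : IsGreatest (ℓ '' {θ | N θ = 1}) D₂)
    (ξ₁ ξ₂ : ℝ → ℝ)
    (hξ₁ : ∀ r : ℝ, ξ₁ r = D₁ * f r)
    (hξ₂0 : ξ₂ 0 = 0) (hξ₂ : ∀ r : ℝ, r ≠ 0 → ξ₂ r = D₂ / f (1 / r)) :
    0 < D₁ ∧ 0 < D₂ ∧ ∀ θ : Fin n → ℝ, ξ₁ (N θ) ≤ ℓ θ ∧ ℓ θ ≤ ξ₂ (N θ) := by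
  obtain ⟨hfc, hf0, hfm, hft⟩ := hf
  obtain ⟨hN0, hNeq, hNsmul, hNtri⟩ := hN
  obtain ⟨⟨θ₀, hθ₀, hθ₀v⟩, hD₁lb⟩ := hD₁
  obtain ⟨hD₂mem, hD₂ub⟩ := hD₂
  have hθ₀ne : θ₀ ≠ 0 := by
    intro h; rw [h] at hθ₀
    simp only [Set.mem_setOf_eq] at hθ₀
    have : N (0 : Fin n → ℝ) = 0 := (hNeq 0).mpr rfl
    linarith
  have hD₁pos : 0 < D₁ := by
    rw [← hθ₀v]
    rcases lt_or_eq_of_le (hnn θ₀) with h | h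
    · exact h
    · exact absurd ((hpd θ₀).mp h.symm) hθ₀ne
  have hD₂pos : 0 < D₂ := lt_of_lt_of_le hD₁pos (hD₁lb hD₂mem)
  have hfpos : ∀ s : ℝ, 0 < s → 0 < f s := fun s hs => by
    have := hfm (Set.self_mem_Ici) (le_of_lt hs : (0:ℝ) ≤ s) hs
    rwa [hf0] at this
  refine ⟨hD₁pos, hD₂pos, fun θ => ?_⟩
  by_cases hθ : θ = 0
  · subst hθ
    have hN0' : N 0 = 0 := (hNeq 0).mpr rfl
    have hℓ0 : ℓ 0 = 0 := (hpd 0).mpr rfl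
    rw [hN0', hℓ0, hξ₁, hf0, hξ₂0]
    simp
  · have hs : 0 < N θ := by
      rcases lt_or_eq_of_le (hN0 θ) with h | h
      · exact h
      · exact absurd ((hNeq θ).mp h.symm) hθ
    set s := N θ with hsdef
    have hsne : s ≠ 0 := ne_of_gt hs
    have hunit : N (s⁻¹ • θ) = 1 := by
      rw [hNsmul, abs_inv, abs_of_pos hs, ← hsdef, inv_mul_cancel₀ hsne]
    have hmem : ℓ (s⁻¹ • θ) ∈ ℓ '' {θ | N θ = 1} := ⟨_, hunit, rfl⟩
    have hlb : D₁ ≤ ℓ (s⁻¹ • θ) := hD₁lb hmem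
    have hub : ℓ (s⁻¹ • θ) ≤ D₂ := hD₂ub hmem
    constructor
    · -- lower bound: ξ₁ s = D₁ * f s ≤ ℓ θ
      have h1 : f (1 / |s⁻¹|) * ℓ (s⁻¹ • θ) ≤ ℓ θ := hGH θ s⁻¹ (inv_ne_zero hsne)
      rw [abs_inv, abs_of_pos hs, one_div, inv_inv] at h1
      have hfs : 0 < f s := hfpos s hs
      calc ξ₁ s = D₁ * f s := hξ₁ s
        _ ≤ ℓ (s⁻¹ • θ) * f s := by nlinarith
        _ = f s * ℓ (s⁻¹ • θ) := mul_comm _ _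
        _ ≤ ℓ θ := h1
    · -- upper bound: ℓ θ ≤ D₂ / f (1/s)
      have h1 : f (1 / |s|) * ℓ (s • s⁻¹ • θ) ≤ ℓ (s⁻¹ • θ) := hGH (s⁻¹ • θ) s hsne
      rw [abs_of_pos hs, smul_smul, mul_inv_cancel₀ hsne, one_smul] at h1
      have hfs : 0 < f (1 / s) := hfpos _ (by positivity)
      rw [hξ₂ s hsne, le_div_iff₀ hfs]
      calc ℓ θ * f (1 / s) = f (1 / s) * ℓ θ := mul_comm _ _
        _ ≤ ℓ (s⁻¹ • θ) := h1
        _ ≤ D₂ := hub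
end

section
/- Under the PE condition with horizon T and lower K∞ bound α, for all t ≥ T the function G_t(θ) = α_ψ Σ_{k=1}^t λ^{t−k} ψ(x_kᵀθ) + α_{ψ₀} λ^t ψ₀(θ) satisfies G_t(θ) ≥ α_ψ λ^{2T−1} α(‖θ‖) for all θ ∈ ℝⁿ. -/
open Finset Filter

/-- under the PE lower bound, for t ≥ T,
G_t(θ) ≥ α_ψ λ^{2T−1} α(‖θ‖). -/
theorem stmt_7 {n : ℕ} (ψ : ℝ → ℝ) (ψ₀ : (Fin n → ℝ) → ℝ)
    (hψnn : ∀ e, 0 ≤ ψ e) (hψ₀nn : ∀ θ, 0 ≤ ψ₀ θ)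
    (x : ℕ → Fin n → ℝ) (N : (Fin n → ℝ) → ℝ) (hN : IsNorm N)
    (αψ αψ₀ l : ℝ) (hαψ : 0 < αψ) (hαψ₀ : 0 < αψ₀) (hl : l ∈ Set.Ioo (0 : ℝ) 1)
    (T : ℕ) (hT : 0 < T) (α : ℝ → ℝ) (hα : ClassKInf α)
    (hPE : ∀ (t : ℕ) (θ : Fin n → ℝ),
      α (N θ) ≤ ∑ k ∈ Finset.Icc (t + 1) (t + T), ψ (dot (x k) θ))
    (G : ℕ → (Fin n → ℝ) → ℝ)
    (hG : ∀ (t : ℕ) (θ : Fin n → ℝ),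
      G t θ = αψ * ∑ k ∈ Finset.Icc 1 t, l ^ (t - k) * ψ (dot (x k) θ) +
        αψ₀ * l ^ t * ψ₀ θ) :
    ∀ (t : ℕ), T ≤ t → ∀ θ : Fin n → ℝ,
      αψ * l ^ (2 * T - 1) * α (N θ) ≤ G t θ := by
  intro t ht θ
  rw [hG]
  obtain ⟨hl0, hl1⟩ := hl
  have hα0 : 0 ≤ α (N θ) := by
    have h0 : α 0 = 0 := hα.2.1
    have := hα.2.2.1.monotoneOn (Set.self_mem_Ici) (hN.1 θ) (hN.1 θ)
    linarith
  have hsub : Finset.Icc (t - T + 1) t ⊆ Finset.Icc 1 t := by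
    intro k hk
    simp only [Finset.mem_Icc] at hk ⊢
    omega
  have key : α (N θ) ≤ ∑ k ∈ Finset.Icc (t - T + 1) t, ψ (dot (x k) θ) := by
    have h := hPE (t - T) θ
    have heq : t - T + T = t := Nat.sub_add_cancel ht
    rwa [heq] at h
  have step1 : l ^ (2 * T - 1) * α (N θ)
      ≤ ∑ k ∈ Finset.Icc (t - T + 1) t, l ^ (t - k) * ψ (dot (x k) θ) := by
    calc l ^ (2 * T - 1) * α (N θ)
        ≤ l ^ (2 * T - 1) * ∑ k ∈ Finset.Icc (t - T + 1) t, ψ (dot (x k) θ) := by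
          exact mul_le_mul_of_nonneg_left key (by positivity)
      _ = ∑ k ∈ Finset.Icc (t - T + 1) t, l ^ (2 * T - 1) * ψ (dot (x k) θ) := by
          rw [Finset.mul_sum]
      _ ≤ ∑ k ∈ Finset.Icc (t - T + 1) t, l ^ (t - k) * ψ (dot (x k) θ) := by
          apply Finset.sum_le_sum
          intro k hk
          simp only [Finset.mem_Icc] at hk
          have hle : t - k ≤ 2 * T - 1 := by omega
          exact mul_le_mul_of_nonneg_right
            (pow_le_pow_of_le_one hl0.le hl1.le hle) (hψnn _)
  have step2 : ∑ k ∈ Finset.Icc (t - T + 1) t, l ^ (t - k) * ψ (dot (x k) θ)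
      ≤ ∑ k ∈ Finset.Icc 1 t, l ^ (t - k) * ψ (dot (x k) θ) := by
    apply Finset.sum_le_sum_of_subset_of_nonneg hsub
    intro k _ _
    have := hψnn (dot (x k) θ)
    positivity
  have hψ₀ : 0 ≤ αψ₀ * l ^ t * ψ₀ θ := by
    have := hψ₀nn θ
    positivity
  have : αψ * (l ^ (2 * T - 1) * α (N θ))
      ≤ αψ * ∑ k ∈ Finset.Icc 1 t, l ^ (t - k) * ψ (dot (x k) θ) :=
    mul_le_mul_of_nonneg_left (step1.trans step2) hαψ.le
  linarith [this]
end

section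
/- Let ψ and ψ₀ be continuous and satisfy positive-definiteness, symmetry, the generalized triangle inequality, and generalized homogeneity, and suppose {x_t} is persistently exciting with respect to ψ. Then for every t ∈ ℕ, the objective V_t(θ) = Σ_{k=1}^t λ^{t−k} ψ(y_k − x_kᵀθ) + λ^t ψ₀(θ − θ̂₀) is coercive (continuous and V_t(θ) → ∞ as ‖θ‖ → ∞), and hence attains its minimum: argmin_θ V_t(θ) ≠ ∅. -/
open Finset Filter

/-! The prior term `λ^t ψ₀(θ - θ̂₀)` alone makes `V_t` coercive. Generalized homogeneity
with `r = 1/‖θ‖` gives `ψ₀ θ ≥ f_ψ₀(‖θ‖) · min_{‖u‖ = 1} ψ₀ u`, and this minimum is positive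
by continuity and positive definiteness. The data terms are nonnegative, so `V_t` tends to `∞`
along the cocompact filter; being continuous, it attains its minimum. Coercivity with respect
to an arbitrary norm `N` follows since `N` is dominated by a multiple of the sup norm. -/

@[fun_prop]
theorem continuous_dot {n : ℕ} (x : Fin n → ℝ) : Continuous (dot x) := by
  unfold dot
  fun_prop

namespace IsNorm

variable {n : ℕ} {N : (Fin n → ℝ) → ℝ}

theorem exists_le_mul_norm (hN : IsNorm N) : ∃ C, 0 < C ∧ ∀ θ, N θ ≤ C * ‖θ‖ := by
  obtain ⟨hnonneg, hzero, hsmul, hadd⟩ := hN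
  classical
  set e : Fin n → Fin n → ℝ := fun i j => if i = j then 1 else 0
  have hsum : 0 ≤ ∑ i, N (e i) := sum_nonneg fun i _ => hnonneg (e i)
  refine ⟨∑ i, N (e i) + 1, by linarith, fun θ => ?_⟩
  calc N θ = N (∑ i, θ i • e i) := by rw [← pi_eq_sum_univ θ]
    _ ≤ ∑ i, N (θ i • e i) :=
        le_sum_of_subadditive N ((hzero 0).2 rfl).le hadd _ _
    _ ≤ ∑ i, ‖θ‖ * N (e i) := by
        gcongr with i
        rw [hsmul]
        exact mul_le_mul_of_nonneg_right (norm_le_pi_norm θ i) (hnonneg _)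
    _ ≤ (∑ i, N (e i) + 1) * ‖θ‖ := by
        rw [← mul_sum, mul_comm]
        gcongr
        linarith

theorem exists_forall_le_of_tendsto_cocompact (hN : IsNorm N) {f : (Fin n → ℝ) → ℝ}
    (hf : Tendsto f (cocompact _) atTop) (M : ℝ) : ∃ R, ∀ θ, R ≤ N θ → M ≤ f θ := by
  obtain ⟨C, hC, hNC⟩ := hN.exists_le_mul_norm
  rw [← Metric.cobounded_eq_cocompact, ← comap_norm_atTop] at hf
  obtain ⟨R, -, hR⟩ := (atTop_basis.comap norm).eventually_iff.1 (tendsto_atTop.1 hf M)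
  refine ⟨C * R, fun θ hθ => hR ?_⟩
  exact le_of_mul_le_mul_left (hθ.trans (hNC θ)) hC

end IsNorm

theorem tendsto_cocompact_atTop_of_homogeneous {E : Type*} [NormedAddCommGroup E]
    [NormedSpace ℝ E] [ProperSpace E] {φ : E → ℝ} {f : ℝ → ℝ} (hφ : Continuous φ)
    (hpos : ∀ θ, θ ≠ 0 → 0 < φ θ) (hf : Tendsto f atTop atTop)
    (hhom : ∀ (θ : E) (r : ℝ), r ≠ 0 → f (1 / |r|) * φ (r • θ) ≤ φ θ) :
    Tendsto φ (cocompact E) atTop := by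
  obtain ⟨m, hm, hmφ⟩ : ∃ m, 0 < m ∧ ∀ u ∈ Metric.sphere (0 : E) 1, m ≤ φ u :=
    (isCompact_sphere 0 1).exists_forall_le' hφ.continuousOn fun u hu =>
      hpos u (ne_zero_of_mem_unit_sphere ⟨u, hu⟩)
  have hlower : ∀ θ : E, θ ≠ 0 → 0 ≤ f ‖θ‖ → f ‖θ‖ * m ≤ φ θ := by
    intro θ hθ hfθ
    have hr : ‖θ‖⁻¹ ≠ 0 := inv_ne_zero (norm_ne_zero_iff.2 hθ)
    have hu : ‖θ‖⁻¹ • θ ∈ Metric.sphere (0 : E) 1 := by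
      simp [norm_smul, hθ]
    calc f ‖θ‖ * m ≤ f ‖θ‖ * φ (‖θ‖⁻¹ • θ) := mul_le_mul_of_nonneg_left (hmφ _ hu) hfθ
      _ ≤ φ θ := by simpa using hhom θ ‖θ‖⁻¹ hr
  have hfnorm := hf.comp (tendsto_norm_cocompact_atTop (E := E))
  refine tendsto_atTop_mono' _ ?_ (hfnorm.atTop_mul_const hm)
  filter_upwards [tendsto_norm_cocompact_atTop.eventually_gt_atTop 0,
    hfnorm.eventually_ge_atTop 0] with θ hθ hfθ
  exact hlower θ (norm_pos_iff.1 hθ) hfθ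

theorem stmt_10_general {n : ℕ} (ψ : ℝ → ℝ) (ψ₀ : (Fin n → ℝ) → ℝ) (fψ₀ : ℝ → ℝ)
    (hψc : Continuous ψ) (hψnn : ∀ e, 0 ≤ ψ e)
    (hψ₀c : Continuous ψ₀) (hψ₀nn : ∀ θ, 0 ≤ ψ₀ θ)
    (hψ₀pd : ∀ θ, ψ₀ θ = 0 ↔ θ = 0)
    (hfψ₀ : ClassKInf fψ₀)
    (hψ₀GH : ∀ (θ : Fin n → ℝ) (r : ℝ), r ≠ 0 → fψ₀ (1 / |r|) * ψ₀ (r • θ) ≤ ψ₀ θ)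
    (x : ℕ → Fin n → ℝ) (y : ℕ → ℝ) (θ₀ : Fin n → ℝ)
    (N : (Fin n → ℝ) → ℝ) (hN : IsNorm N)
    (l : ℝ) (hl : l ∈ Set.Ioo (0 : ℝ) 1)
    (V : ℕ → (Fin n → ℝ) → ℝ)
    (hV : ∀ (t : ℕ) (θ : Fin n → ℝ),
      V t θ = ∑ k ∈ Finset.Icc 1 t, l ^ (t - k) * ψ (y k - dot (x k) θ) +
        l ^ t * ψ₀ (θ - θ₀)) :
    ∀ t : ℕ,
      Continuous (V t) ∧
      (∀ M : ℝ, ∃ R : ℝ, ∀ θ : Fin n → ℝ, R ≤ N θ → M ≤ V t θ) ∧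
      ∃ θm : Fin n → ℝ, ∀ θ : Fin n → ℝ, V t θm ≤ V t θ := by
  intro t
  have hcont : Continuous (V t) := by
    rw [funext (hV t)]
    fun_prop
  have hprior : Tendsto (fun θ => l ^ t * ψ₀ (θ - θ₀)) (cocompact _) atTop :=
    Tendsto.const_mul_atTop (pow_pos hl.1 t) <|
      (tendsto_cocompact_atTop_of_homogeneous hψ₀c
        (fun θ hθ => (hψ₀nn θ).lt_of_ne' (hθ ∘ (hψ₀pd θ).1)) hfψ₀.2.2.2 hψ₀GH).comp
        (Homeomorph.subRight θ₀).map_cocompact.le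
  have hcoercive : Tendsto (V t) (cocompact _) atTop := by
    refine tendsto_atTop_mono (fun θ => ?_) hprior
    rw [hV]
    exact le_add_of_nonneg_left <| sum_nonneg fun k _ =>
      mul_nonneg (pow_nonneg hl.1.le _) (hψnn _)
  exact ⟨hcont, hN.exists_forall_le_of_tendsto_cocompact hcoercive,
    hcont.exists_forall_le hcoercive⟩

/-- the objective V_t is coercive and attains its minimum. -/
theorem stmt_10 {n : ℕ} (ψ : ℝ → ℝ) (ψ₀ : (Fin n → ℝ) → ℝ) (fψ fψ₀ : ℝ → ℝ)
    (hψc : Continuous ψ) (hψnn : ∀ e, 0 ≤ ψ e)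
    (hψpd : ∀ e, ψ e = 0 ↔ e = 0) (hψsym : ∀ e, ψ (-e) = ψ e)
    (αψ : ℝ) (hαψ : 0 < αψ) (hψGTI : ∀ e e' : ℝ, αψ * ψ e - ψ e' ≤ ψ (e - e'))
    (hfψ : ClassKInf fψ)
    (hψGH : ∀ (e r : ℝ), r ≠ 0 → fψ (1 / |r|) * ψ (r * e) ≤ ψ e)
    (hψ₀c : Continuous ψ₀) (hψ₀nn : ∀ θ, 0 ≤ ψ₀ θ)
    (hψ₀pd : ∀ θ, ψ₀ θ = 0 ↔ θ = 0) (hψ₀sym : ∀ θ, ψ₀ (-θ) = ψ₀ θ)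
    (αψ₀ : ℝ) (hαψ₀ : 0 < αψ₀)
    (hψ₀GTI : ∀ θ θ' : Fin n → ℝ, αψ₀ * ψ₀ θ - ψ₀ θ' ≤ ψ₀ (θ - θ'))
    (hfψ₀ : ClassKInf fψ₀)
    (hψ₀GH : ∀ (θ : Fin n → ℝ) (r : ℝ), r ≠ 0 → fψ₀ (1 / |r|) * ψ₀ (r • θ) ≤ ψ₀ θ)
    (x : ℕ → Fin n → ℝ) (y : ℕ → ℝ) (θ₀ : Fin n → ℝ)
    (N : (Fin n → ℝ) → ℝ) (hN : IsNorm N)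
    (l : ℝ) (hl : l ∈ Set.Ioo (0 : ℝ) 1)
    (T : ℕ) (hT : 0 < T) (α β : ℝ → ℝ) (hα : ClassKInf α) (hβ : ClassKInf β)
    (hPE : ∀ (t : ℕ) (θ : Fin n → ℝ),
      α (N θ) ≤ ∑ k ∈ Finset.Icc (t + 1) (t + T), ψ (dot (x k) θ) ∧
      ∑ k ∈ Finset.Icc (t + 1) (t + T), ψ (dot (x k) θ) ≤ β (N θ))
    (V : ℕ → (Fin n → ℝ) → ℝ)
    (hV : ∀ (t : ℕ) (θ : Fin n → ℝ),
      V t θ = ∑ k ∈ Finset.Icc 1 t, l ^ (t - k) * ψ (y k - dot (x k) θ) +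
        l ^ t * ψ₀ (θ - θ₀)) :
    ∀ t : ℕ,
      Continuous (V t) ∧
      (∀ M : ℝ, ∃ R : ℝ, ∀ θ : Fin n → ℝ, R ≤ N θ → M ≤ V t θ) ∧
      ∃ θm : Fin n → ℝ, ∀ θ : Fin n → ℝ, V t θm ≤ V t θ :=
  stmt_10_general ψ ψ₀ fψ₀ hψc hψnn hψ₀c hψ₀nn hψ₀pd hfψ₀ hψ₀GH x y θ₀ N hN l hl V hV
end

section
/- Let ψ and ψ₀ satisfy the generalized triangle inequality with constants α_ψ > 0 and α_{ψ₀} > 0 respectively. Suppose y_k = x_kᵀθ° + v_k, let θ̂_t minimize V_t(θ) = Σ_{k=1}^t λ^{t−k} ψ(y_k − x_kᵀθ) + λ^t ψ₀(θ − θ̂₀), and set η_t = θ̂_t − θ°. Then G_t(η_t) ≤ 2·V_t(θ°), where G_t(θ) = α_ψ Σ_{k=1}^t λ^{t−k} ψ(x_kᵀθ) + α_{ψ₀} λ^t ψ₀(θ) and V_t(θ°) = Σ_{k=1}^t λ^{t−k} ψ(v_k) + λ^t ψ₀(θ̂₀ − θ°). -/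
open Finset Filter

/-- the key inequality G_t(η_t) ≤ 2 V_t(θ°) for any minimizer. -/
theorem stmt_11 {n : ℕ} (ψ : ℝ → ℝ) (ψ₀ : (Fin n → ℝ) → ℝ)
    (hψnn : ∀ e, 0 ≤ ψ e) (hψsym : ∀ e, ψ (-e) = ψ e)
    (αψ : ℝ) (hαψ : 0 < αψ) (hψGTI : ∀ e e' : ℝ, αψ * ψ e - ψ e' ≤ ψ (e - e'))
    (hψ₀nn : ∀ θ, 0 ≤ ψ₀ θ) (hψ₀sym : ∀ θ, ψ₀ (-θ) = ψ₀ θ)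
    (αψ₀ : ℝ) (hαψ₀ : 0 < αψ₀)
    (hψ₀GTI : ∀ θ θ' : Fin n → ℝ, αψ₀ * ψ₀ θ - ψ₀ θ' ≤ ψ₀ (θ - θ'))
    (x : ℕ → Fin n → ℝ) (y v : ℕ → ℝ) (θc θ₀ : Fin n → ℝ)
    (hy : ∀ k : ℕ, y k = dot (x k) θc + v k)
    (l : ℝ) (hl : l ∈ Set.Ioo (0 : ℝ) 1)
    (V : ℕ → (Fin n → ℝ) → ℝ)
    (hV : ∀ (t : ℕ) (θ : Fin n → ℝ),
      V t θ = ∑ k ∈ Finset.Icc 1 t, l ^ (t - k) * ψ (y k - dot (x k) θ) +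
        l ^ t * ψ₀ (θ - θ₀))
    (G : ℕ → (Fin n → ℝ) → ℝ)
    (hG : ∀ (t : ℕ) (θ : Fin n → ℝ),
      G t θ = αψ * ∑ k ∈ Finset.Icc 1 t, l ^ (t - k) * ψ (dot (x k) θ) +
        αψ₀ * l ^ t * ψ₀ θ)
    (t : ℕ) (θhat : Fin n → ℝ) (hmin : ∀ θ : Fin n → ℝ, V t θhat ≤ V t θ) :
    G t (θhat - θc) ≤
      2 * (∑ k ∈ Finset.Icc 1 t, l ^ (t - k) * ψ (v k) + l ^ t * ψ₀ (θ₀ - θc)) := by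
  have hl0 : (0:ℝ) < l := hl.1
  have hdot : ∀ k, dot (x k) (θhat - θc) = dot (x k) θhat - dot (x k) θc := by
    intro k; simp [dot, Pi.sub_apply, mul_sub, Finset.sum_sub_distrib]
  have key : G t (θhat - θc) ≤ V t θc + V t θhat := by
    rw [hG, hV, hV]
    have hterm : ∀ k ∈ Finset.Icc 1 t,
        αψ * (l ^ (t - k) * ψ (dot (x k) (θhat - θc))) ≤
        l ^ (t - k) * ψ (y k - dot (x k) θc) + l ^ (t - k) * ψ (y k - dot (x k) θhat) := by
      intro k _
      have he : dot (x k) (θhat - θc) = dot (x k) θhat - dot (x k) θc := hdot k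
      set e := dot (x k) θhat - dot (x k) θc with hE
      have h1 : αψ * ψ e - ψ (e - v k) ≤ ψ (v k) := by
        have := hψGTI e (e - v k)
        simpa using this
      have h2 : ψ (e - v k) = ψ (y k - dot (x k) θhat) := by
        have : y k - dot (x k) θhat = v k - e := by rw [hy k, hE]; ring
        rw [this, ← hψsym (v k - e)]; ring_nf
      have h3 : y k - dot (x k) θc = v k := by rw [hy k]; ring
      have h4 : αψ * ψ e ≤ ψ (v k) + ψ (y k - dot (x k) θhat) := by
        rw [← h2]; linarith
      have hlnn : (0:ℝ) ≤ l ^ (t - k) := le_of_lt (pow_pos hl0 _)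
      rw [he, h3]
      calc αψ * (l ^ (t - k) * ψ e) = l ^ (t - k) * (αψ * ψ e) := by ring
        _ ≤ l ^ (t - k) * (ψ (v k) + ψ (y k - dot (x k) θhat)) :=
            mul_le_mul_of_nonneg_left h4 hlnn
        _ = l ^ (t - k) * ψ (v k) + l ^ (t - k) * ψ (y k - dot (x k) θhat) := by ring
    have hsum : αψ * ∑ k ∈ Finset.Icc 1 t, l ^ (t - k) * ψ (dot (x k) (θhat - θc)) ≤
        (∑ k ∈ Finset.Icc 1 t, l ^ (t - k) * ψ (y k - dot (x k) θc)) +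
        ∑ k ∈ Finset.Icc 1 t, l ^ (t - k) * ψ (y k - dot (x k) θhat) := by
      rw [Finset.mul_sum, ← Finset.sum_add_distrib]
      exact Finset.sum_le_sum hterm
    have hpsi0 : αψ₀ * ψ₀ (θhat - θc) ≤ ψ₀ (θc - θ₀) + ψ₀ (θhat - θ₀) := by
      have := hψ₀GTI (θhat - θc) (θ₀ - θc)
      have heq : θhat - θc - (θ₀ - θc) = θhat - θ₀ := by abel
      rw [heq] at this
      have hs : ψ₀ (θ₀ - θc) = ψ₀ (θc - θ₀) := by rw [← hψ₀sym (θc - θ₀), neg_sub]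
      linarith
    have hltnn : (0:ℝ) ≤ l ^ t := le_of_lt (pow_pos hl0 _)
    have h5 : αψ₀ * l ^ t * ψ₀ (θhat - θc) ≤ l ^ t * ψ₀ (θc - θ₀) + l ^ t * ψ₀ (θhat - θ₀) := by
      calc αψ₀ * l ^ t * ψ₀ (θhat - θc) = l ^ t * (αψ₀ * ψ₀ (θhat - θc)) := by ring
        _ ≤ l ^ t * (ψ₀ (θc - θ₀) + ψ₀ (θhat - θ₀)) := mul_le_mul_of_nonneg_left hpsi0 hltnn
        _ = _ := by ring
    linarith
  have hVc : V t θc = ∑ k ∈ Finset.Icc 1 t, l ^ (t - k) * ψ (v k) + l ^ t * ψ₀ (θ₀ - θc) := by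
    rw [hV]
    congr 1
    · apply Finset.sum_congr rfl; intro k _
      have : y k - dot (x k) θc = v k := by rw [hy k]; ring
      rw [this]
    · rw [← hψ₀sym (θ₀ - θc), neg_sub]
  have := hmin θc
  linarith [key, hVc ▸ key]
end

section
/- (Main ISS theorem) Let y_t = x_tᵀθ° + v_t, let ψ, ψ₀ be continuous, positive-definite, symmetric, satisfy the generalized triangle inequality and generalized homogeneity, and suppose {x_t} is persistently exciting with respect to ψ for a norm ‖·‖. Then there exists a class-K∞ function ξ such that every sequence of minimizers θ̂_t ∈ argmin_θ V_t(θ) satisfies ‖θ̂_t − θ°‖ ≤ ξ⁻¹( 2λ^t ψ₀(θ̂₀ − θ°) + 2 Σ_{k=1}^t λ^{t−k} ψ(v_k) ) for all t ∈ ℕ. -/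
/-!
Comparing the cost of a minimizer `θ̂_t` with the cost of `θ°`, the generalized triangle
inequalities bound `αψ Σ λ^{t-k} ψ(x_kᵀ(θ̂_t - θ°)) + αψ₀ λ^t ψ₀(θ̂_t - θ°)` by twice the
prior-and-noise term. This quantity dominates `ξ(‖θ̂_t - θ°‖)` for
`ξ(s) = λ^{T-1} min(αψ α(s), αψ₀ ρ(s))`: once `t ≥ T` the last excitation window yields `α`,
discounted by at most `λ^{T-1}`, and before that the prior term yields `ρ`, a class-K∞ lower
bound of `ψ₀` obtained from homogeneity and compactness of the unit sphere. Inverting `ξ`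
concludes.
-/

open Finset Filter

namespace ClassKInf

open Set Function

variable {f g : ℝ → ℝ}

lemma mapsTo (hf : ClassKInf f) : MapsTo f (Ici 0) (Ici 0) := fun _ hs =>
  hf.2.1 ▸ hf.2.2.1.monotoneOn self_mem_Ici hs hs

lemma nonneg (hf : ClassKInf f) {s : ℝ} (hs : 0 ≤ s) : 0 ≤ f s := hf.mapsTo hs

lemma id : ClassKInf id := ⟨continuousOn_id, rfl, strictMono_id.strictMonoOn _, tendsto_id⟩

lemma const_mul (hf : ClassKInf f) {c : ℝ} (hc : 0 < c) : ClassKInf fun s => c * f s :=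
  ⟨continuousOn_const.mul hf.1, by simp [hf.2.1],
    fun _ hp _ hq hpq => mul_lt_mul_of_pos_left (hf.2.2.1 hp hq hpq) hc,
    hf.2.2.2.const_mul_atTop hc⟩

lemma comp (hf : ClassKInf f) (hg : ClassKInf g) : ClassKInf (f ∘ g) :=
  ⟨hf.1.comp hg.1 hg.mapsTo, by simp [hg.2.1, hf.2.1],
    hf.2.2.1.comp hg.2.2.1 hg.mapsTo, hf.2.2.2.comp hg.2.2.2⟩

lemma min (hf : ClassKInf f) (hg : ClassKInf g) : ClassKInf fun s => min (f s) (g s) := by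
  refine ⟨ContinuousOn.inf hf.1 hg.1, by simp [hf.2.1, hg.2.1],
    fun _ hp _ hq hpq => min_lt_min (hf.2.2.1 hp hq hpq) (hg.2.2.1 hp hq hpq), ?_⟩
  rw [tendsto_atTop]
  intro b
  filter_upwards [tendsto_atTop.mp hf.2.2.2 b, tendsto_atTop.mp hg.2.2.2 b] with s hfs hgs
  exact le_min hfs hgs

/-- The inverse is extended by the identity on the negative reals; it is then monotone and
surjective on all of `ℝ`, hence continuous. -/
lemma exists_inverse (hf : ClassKInf f) :
    ∃ finv : ℝ → ℝ, ClassKInf finv ∧ ∀ s, 0 ≤ s → f (finv s) = s ∧ finv (f s) = s := by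
  have hsurj : SurjOn f (Ici 0) (Ici 0) := by
    have := intermediate_value_Ici (a := 0) hf.1 hf.2.2.2
    rwa [hf.2.1] at this
  have hinv : InvOn (invFunOn f (Ici 0)) f (Ici 0) (Ici 0) :=
    BijOn.invOn_invFunOn ⟨hf.mapsTo, hf.2.2.1.injOn, hsurj⟩
  have hmaps : MapsTo (invFunOn f (Ici 0)) (Ici 0) (Ici 0) := hsurj.mapsTo_invFunOn
  set finv : ℝ → ℝ := fun s => if 0 ≤ s then invFunOn f (Ici 0) s else s
  have hfinv : ∀ s, 0 ≤ s → finv s = invFunOn f (Ici 0) s := fun s hs => if_pos hs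
  have hmono : StrictMonoOn finv (Ici 0) := by
    intro a ha b hb hab
    rw [hfinv a ha, hfinv b hb, ← hf.2.2.1.lt_iff_lt (hmaps ha) (hmaps hb), hinv.2 ha, hinv.2 hb]
    exact hab
  have hmonotone : Monotone finv := by
    intro a b hab
    by_cases hb : 0 ≤ b
    · by_cases ha : 0 ≤ a
      · exact hmono.monotoneOn ha hb hab
      · rw [hfinv b hb, show finv a = a from if_neg ha]
        exact (le_of_not_ge ha).trans (hmaps hb)
    · have ha : ¬ 0 ≤ a := fun ha => hb (ha.trans hab)
      simpa [finv, ha, hb] using hab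
  have hsurjective : Surjective finv := by
    intro s
    by_cases hs : 0 ≤ s
    · exact ⟨f s, by rw [hfinv _ (hf.nonneg hs), hinv.1 hs]⟩
    · exact ⟨s, if_neg hs⟩
  refine ⟨finv, ⟨(hmonotone.continuous_of_surjective hsurjective).continuousOn, ?_, hmono, ?_⟩,
    fun s hs => ?_⟩
  · have := hinv.1 (self_mem_Ici (a := (0:ℝ)))
    rwa [hf.2.1, ← hfinv 0 le_rfl] at this
  · exact hmonotone.tendsto_atTop_atTop fun b => (hsurjective b).imp fun _ h => h.ge
  · rw [hfinv s hs, hfinv _ (hf.nonneg hs)]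
    exact ⟨hinv.2 hs, hinv.1 hs⟩

lemma le_inv_of_apply_le (hf : ClassKInf f) (hg : ClassKInf g)
    (hinv : ∀ s, 0 ≤ s → g (f s) = s) {s r : ℝ} (hs : 0 ≤ s) (h : f s ≤ r) : s ≤ g r :=
  calc s = g (f s) := (hinv s hs).symm
    _ ≤ g r := hg.2.2.1.monotoneOn (hf.nonneg hs) ((hf.nonneg hs).trans h) h

end ClassKInf

namespace IsNorm

variable {n : ℕ} {N : (Fin n → ℝ) → ℝ}

lemma sum_le (hN : IsNorm N) {ι : Type*} (s : Finset ι) (f : ι → Fin n → ℝ) :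
    N (∑ i ∈ s, f i) ≤ ∑ i ∈ s, N (f i) := by
  classical
  induction s using Finset.induction_on with
  | empty => simp [(hN.2.1 0).mpr rfl]
  | insert i s hi ih =>
    rw [sum_insert hi, sum_insert hi]
    exact (hN.2.2.2 _ _).trans (by linarith)

lemma le_mul_norm (hN : IsNorm N) : ∃ C > 0, ∀ θ, N θ ≤ C * ‖θ‖ := by
  set e : Fin n → Fin n → ℝ := fun i j => if i = j then 1 else 0
  have hsum : 0 ≤ ∑ i, N (e i) := sum_nonneg fun i _ => hN.1 _
  refine ⟨1 + ∑ i, N (e i), by linarith, fun θ => ?_⟩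
  calc N θ = N (∑ i, θ i • e i) := congrArg N (pi_eq_sum_univ θ)
    _ ≤ ∑ i, |θ i| * N (e i) := by simpa only [hN.2.2.1] using hN.sum_le univ fun i => θ i • e i
    _ ≤ ∑ i, ‖θ‖ * N (e i) := by
      gcongr with i
      · exact hN.1 _
      · exact norm_le_pi_norm θ i
    _ ≤ (1 + ∑ i, N (e i)) * ‖θ‖ := by
      rw [← mul_sum]
      nlinarith [norm_nonneg θ]

end IsNorm

lemma exists_pos_mul_le_of_homogeneous {E : Type*} [NormedAddCommGroup E] [NormedSpace ℝ E]
    [ProperSpace E] {φ : E → ℝ} {f : ℝ → ℝ} (hφc : Continuous φ) (hφnn : ∀ θ, 0 ≤ φ θ)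
    (hφpd : ∀ θ, φ θ = 0 ↔ θ = 0) (hf : ClassKInf f)
    (hφGH : ∀ (θ : E) (r : ℝ), r ≠ 0 → f (1 / |r|) * φ (r • θ) ≤ φ θ) :
    ∃ m > 0, ∀ θ, m * f ‖θ‖ ≤ φ θ := by
  have hpos : ∀ u ∈ Metric.sphere (0 : E) 1, 0 < φ u := fun u hu =>
    (hφnn u).lt_of_ne' fun h => by simp [(hφpd u).mp h] at hu
  obtain ⟨m, hm, hmin⟩ :=
    (isCompact_sphere (0 : E) 1).exists_forall_le' hφc.continuousOn hpos
  refine ⟨m, hm, fun θ => ?_⟩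
  rcases eq_or_ne θ 0 with rfl | hθ
  · simpa [hf.2.1] using hφnn 0
  have hθpos : 0 < ‖θ‖ := norm_pos_iff.mpr hθ
  have hsphere : ‖θ‖⁻¹ • θ ∈ Metric.sphere (0 : E) 1 := by
    simp [norm_smul, hθpos.ne']
  calc m * f ‖θ‖ ≤ f ‖θ‖ * φ (‖θ‖⁻¹ • θ) := by
        rw [mul_comm]; exact mul_le_mul_of_nonneg_left (hmin _ hsphere) (hf.nonneg hθpos.le)
    _ ≤ φ θ := by
        simpa [abs_of_pos hθpos] using hφGH θ ‖θ‖⁻¹ (inv_ne_zero hθpos.ne')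

lemma exists_classKInf_le_of_homogeneous {n : ℕ} {N : (Fin n → ℝ) → ℝ} (hN : IsNorm N)
    {φ : (Fin n → ℝ) → ℝ} {f : ℝ → ℝ} (hφc : Continuous φ) (hφnn : ∀ θ, 0 ≤ φ θ)
    (hφpd : ∀ θ, φ θ = 0 ↔ θ = 0) (hf : ClassKInf f)
    (hφGH : ∀ (θ : Fin n → ℝ) (r : ℝ), r ≠ 0 → f (1 / |r|) * φ (r • θ) ≤ φ θ) :
    ∃ ρ, ClassKInf ρ ∧ ∀ θ, ρ (N θ) ≤ φ θ := by
  obtain ⟨C, hC, hNC⟩ := hN.le_mul_norm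
  obtain ⟨m, hm, hmφ⟩ := exists_pos_mul_le_of_homogeneous hφc hφnn hφpd hf hφGH
  refine ⟨_, (hf.comp (ClassKInf.id.const_mul (inv_pos.mpr hC))).const_mul hm, fun θ => ?_⟩
  have hscaled : C⁻¹ * N θ ≤ ‖θ‖ := (inv_mul_le_iff₀ hC).mpr (hNC θ)
  calc m * f (C⁻¹ * N θ) ≤ m * f ‖θ‖ := by
        gcongr
        exact hf.2.2.1.monotoneOn (mul_nonneg (inv_nonneg.mpr hC.le) (hN.1 θ)) (norm_nonneg θ)
          hscaled
    _ ≤ φ θ := hmφ θ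

lemma dot_sub {n : ℕ} (x θ θ' : Fin n → ℝ) : dot x θ - dot x θ' = dot x (θ - θ') := by
  simp only [dot, Pi.sub_apply, mul_sub, sum_sub_distrib]

lemma pow_mul_sum_window_le {l : ℝ} (hl0 : 0 ≤ l) (hl1 : l ≤ 1) {a : ℕ → ℝ}
    (ha : ∀ k, 0 ≤ a k) {T t : ℕ} (hTt : T ≤ t) :
    l ^ (T - 1) * ∑ k ∈ Icc (t - T + 1) t, a k ≤ ∑ k ∈ Icc 1 t, l ^ (t - k) * a k := by
  rw [mul_sum]
  calc ∑ k ∈ Icc (t - T + 1) t, l ^ (T - 1) * a k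
      ≤ ∑ k ∈ Icc (t - T + 1) t, l ^ (t - k) * a k := by
        refine sum_le_sum fun k hk => mul_le_mul_of_nonneg_right ?_ (ha k)
        exact pow_le_pow_of_le_one hl0 hl1 (by rw [mem_Icc] at hk; omega)
    _ ≤ ∑ k ∈ Icc 1 t, l ^ (t - k) * a k :=
        sum_le_sum_of_subset_of_nonneg (Icc_subset_Icc (by omega) le_rfl)
          fun k _ _ => mul_nonneg (pow_nonneg hl0 _) (ha k)

section Estimator

variable {n : ℕ} {ψ : ℝ → ℝ} {ψ₀ : (Fin n → ℝ) → ℝ} {x : ℕ → Fin n → ℝ} {y v : ℕ → ℝ}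
  {θc θ₀ : Fin n → ℝ} {l αψ αψ₀ : ℝ} {V : ℕ → (Fin n → ℝ) → ℝ}

lemma cost_at_true_param (hψ₀sym : ∀ θ, ψ₀ (-θ) = ψ₀ θ)
    (hy : ∀ k, y k = dot (x k) θc + v k)
    (hV : ∀ t θ, V t θ = ∑ k ∈ Icc 1 t, l ^ (t - k) * ψ (y k - dot (x k) θ) +
      l ^ t * ψ₀ (θ - θ₀)) (t : ℕ) :
    V t θc = ∑ k ∈ Icc 1 t, l ^ (t - k) * ψ (v k) + l ^ t * ψ₀ (θ₀ - θc) := by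
  rw [hV, ← neg_sub, hψ₀sym]
  simp only [hy, add_sub_cancel_left]

lemma le_cost (hl : 0 ≤ l) (hψsym : ∀ e, ψ (-e) = ψ e)
    (hψGTI : ∀ e e' : ℝ, αψ * ψ e - ψ e' ≤ ψ (e - e'))
    (hψ₀GTI : ∀ θ θ' : Fin n → ℝ, αψ₀ * ψ₀ θ - ψ₀ θ' ≤ ψ₀ (θ - θ'))
    (hy : ∀ k, y k = dot (x k) θc + v k)
    (hV : ∀ t θ, V t θ = ∑ k ∈ Icc 1 t, l ^ (t - k) * ψ (y k - dot (x k) θ) +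
      l ^ t * ψ₀ (θ - θ₀)) (t : ℕ) (θ : Fin n → ℝ) :
    αψ * ∑ k ∈ Icc 1 t, l ^ (t - k) * ψ (dot (x k) (θ - θc)) -
        ∑ k ∈ Icc 1 t, l ^ (t - k) * ψ (v k) +
      (αψ₀ * (l ^ t * ψ₀ (θ - θc)) - l ^ t * ψ₀ (θ₀ - θc)) ≤ V t θ := by
  rw [hV, mul_sum, ← sum_sub_distrib]
  refine add_le_add (sum_le_sum fun k _ => ?_) ?_
  · have harg : y k - dot (x k) θ = -(dot (x k) (θ - θc) - v k) := by
      rw [hy, ← dot_sub]; ring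
    rw [harg, hψsym, ← mul_assoc, mul_comm αψ, mul_assoc, ← mul_sub]
    exact mul_le_mul_of_nonneg_left (hψGTI _ _) (pow_nonneg hl _)
  · rw [show θ - θ₀ = (θ - θc) - (θ₀ - θc) by abel, ← mul_assoc, mul_comm αψ₀, mul_assoc,
      ← mul_sub]
    exact mul_le_mul_of_nonneg_left (hψ₀GTI _ _) (pow_nonneg hl _)

lemma energy_le_of_le_cost_at_true_param (hl : 0 ≤ l) (hψsym : ∀ e, ψ (-e) = ψ e)
    (hψGTI : ∀ e e' : ℝ, αψ * ψ e - ψ e' ≤ ψ (e - e')) (hψ₀sym : ∀ θ, ψ₀ (-θ) = ψ₀ θ)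
    (hψ₀GTI : ∀ θ θ' : Fin n → ℝ, αψ₀ * ψ₀ θ - ψ₀ θ' ≤ ψ₀ (θ - θ'))
    (hy : ∀ k, y k = dot (x k) θc + v k)
    (hV : ∀ t θ, V t θ = ∑ k ∈ Icc 1 t, l ^ (t - k) * ψ (y k - dot (x k) θ) +
      l ^ t * ψ₀ (θ - θ₀)) {t : ℕ} {θ : Fin n → ℝ} (hmin : V t θ ≤ V t θc) :
    αψ * ∑ k ∈ Icc 1 t, l ^ (t - k) * ψ (dot (x k) (θ - θc)) + αψ₀ * (l ^ t * ψ₀ (θ - θc)) ≤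
      2 * l ^ t * ψ₀ (θ₀ - θc) + 2 * ∑ k ∈ Icc 1 t, l ^ (t - k) * ψ (v k) := by
  have hlow := le_cost (θ₀ := θ₀) hl hψsym hψGTI hψ₀GTI hy hV t θ
  have htrue := cost_at_true_param (ψ := ψ) (l := l) hψ₀sym hy hV t
  linarith

lemma mul_min_le_energy (hl0 : 0 ≤ l) (hl1 : l ≤ 1) (hαψ : 0 ≤ αψ) (hαψ₀ : 0 ≤ αψ₀)
    (hψnn : ∀ e, 0 ≤ ψ e) (hψ₀nn : ∀ θ, 0 ≤ ψ₀ θ) {N : (Fin n → ℝ) → ℝ} {T : ℕ}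
    {α ρ : ℝ → ℝ} (hPE : ∀ (t : ℕ) (θ : Fin n → ℝ),
      α (N θ) ≤ ∑ k ∈ Icc (t + 1) (t + T), ψ (dot (x k) θ))
    (hρ : ∀ θ, ρ (N θ) ≤ ψ₀ θ) (t : ℕ) (d : Fin n → ℝ) :
    l ^ (T - 1) * min (αψ * α (N d)) (αψ₀ * ρ (N d)) ≤
      αψ * ∑ k ∈ Icc 1 t, l ^ (t - k) * ψ (dot (x k) d) + αψ₀ * (l ^ t * ψ₀ d) := by
  have hlT : 0 ≤ l ^ (T - 1) := pow_nonneg hl0 _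
  have hS : 0 ≤ αψ * ∑ k ∈ Icc 1 t, l ^ (t - k) * ψ (dot (x k) d) :=
    mul_nonneg hαψ (sum_nonneg fun k _ => mul_nonneg (pow_nonneg hl0 _) (hψnn _))
  have hψ₀d : 0 ≤ αψ₀ * ψ₀ d := mul_nonneg hαψ₀ (hψ₀nn d)
  rcases le_or_gt T t with hTt | htT
  · have hwindow := hPE (t - T) d
    rw [Nat.sub_add_cancel hTt] at hwindow
    calc l ^ (T - 1) * min (αψ * α (N d)) (αψ₀ * ρ (N d))
        ≤ l ^ (T - 1) * (αψ * α (N d)) := mul_le_mul_of_nonneg_left (min_le_left _ _) hlT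
      _ ≤ αψ * (l ^ (T - 1) * ∑ k ∈ Icc (t - T + 1) t, ψ (dot (x k) d)) := by
        rw [mul_left_comm]; gcongr
      _ ≤ αψ * ∑ k ∈ Icc 1 t, l ^ (t - k) * ψ (dot (x k) d) := by
        gcongr; exact pow_mul_sum_window_le hl0 hl1 (fun k => hψnn _) hTt
      _ ≤ _ := le_add_of_nonneg_right (by rw [mul_left_comm]; positivity)
  · calc l ^ (T - 1) * min (αψ * α (N d)) (αψ₀ * ρ (N d))
        ≤ l ^ (T - 1) * (αψ₀ * ψ₀ d) := by
          gcongr; exact (min_le_right _ _).trans (by gcongr; exact hρ d)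
      _ ≤ l ^ t * (αψ₀ * ψ₀ d) :=
          mul_le_mul_of_nonneg_right (pow_le_pow_of_le_one hl0 hl1 (by omega)) hψ₀d
      _ ≤ _ := by rw [mul_left_comm]; exact le_add_of_nonneg_left hS

end Estimator

theorem stmt_12_general {n : ℕ} (ψ : ℝ → ℝ) (ψ₀ : (Fin n → ℝ) → ℝ) (fψ₀ : ℝ → ℝ)
    (hψnn : ∀ e, 0 ≤ ψ e) (hψsym : ∀ e, ψ (-e) = ψ e)
    (αψ : ℝ) (hαψ : 0 < αψ) (hψGTI : ∀ e e' : ℝ, αψ * ψ e - ψ e' ≤ ψ (e - e'))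
    (hψ₀c : Continuous ψ₀) (hψ₀nn : ∀ θ, 0 ≤ ψ₀ θ)
    (hψ₀pd : ∀ θ, ψ₀ θ = 0 ↔ θ = 0) (hψ₀sym : ∀ θ, ψ₀ (-θ) = ψ₀ θ)
    (αψ₀ : ℝ) (hαψ₀ : 0 < αψ₀)
    (hψ₀GTI : ∀ θ θ' : Fin n → ℝ, αψ₀ * ψ₀ θ - ψ₀ θ' ≤ ψ₀ (θ - θ'))
    (hfψ₀ : ClassKInf fψ₀)
    (hψ₀GH : ∀ (θ : Fin n → ℝ) (r : ℝ), r ≠ 0 → fψ₀ (1 / |r|) * ψ₀ (r • θ) ≤ ψ₀ θ)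
    (x : ℕ → Fin n → ℝ) (y v : ℕ → ℝ) (θc θ₀ : Fin n → ℝ)
    (hy : ∀ k : ℕ, y k = dot (x k) θc + v k)
    (N : (Fin n → ℝ) → ℝ) (hN : IsNorm N)
    (l : ℝ) (hl : l ∈ Set.Ioo (0 : ℝ) 1)
    (T : ℕ) (α β : ℝ → ℝ) (hα : ClassKInf α)
    (hPE : ∀ (t : ℕ) (θ : Fin n → ℝ),
      α (N θ) ≤ ∑ k ∈ Finset.Icc (t + 1) (t + T), ψ (dot (x k) θ) ∧
      ∑ k ∈ Finset.Icc (t + 1) (t + T), ψ (dot (x k) θ) ≤ β (N θ))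
    (V : ℕ → (Fin n → ℝ) → ℝ)
    (hV : ∀ (t : ℕ) (θ : Fin n → ℝ),
      V t θ = ∑ k ∈ Finset.Icc 1 t, l ^ (t - k) * ψ (y k - dot (x k) θ) +
        l ^ t * ψ₀ (θ - θ₀)) :
    ∃ ξ ξinv : ℝ → ℝ, ClassKInf ξ ∧ ClassKInf ξinv ∧
      (∀ s : ℝ, 0 ≤ s → ξ (ξinv s) = s ∧ ξinv (ξ s) = s) ∧
      ∀ θhat : ℕ → Fin n → ℝ,
        (∀ (t : ℕ) (θ : Fin n → ℝ), V t (θhat t) ≤ V t θ) →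
        ∀ t : ℕ, N (θhat t - θc) ≤
          ξinv (2 * l ^ t * ψ₀ (θ₀ - θc) +
            2 * ∑ k ∈ Finset.Icc 1 t, l ^ (t - k) * ψ (v k)) := by
  obtain ⟨hl0, hl1⟩ := hl
  obtain ⟨ρ, hρ, hρψ₀⟩ := exists_classKInf_le_of_homogeneous hN hψ₀c hψ₀nn hψ₀pd hfψ₀ hψ₀GH
  have hξ : ClassKInf fun s => l ^ (T - 1) * min (αψ * α s) (αψ₀ * ρ s) :=
    ((hα.const_mul hαψ).min (hρ.const_mul hαψ₀)).const_mul (pow_pos hl0 _)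
  obtain ⟨ξinv, hξinv, hinv⟩ := hξ.exists_inverse
  refine ⟨_, ξinv, hξ, hξinv, hinv, fun θhat hmin t => ?_⟩
  refine hξ.le_inv_of_apply_le hξinv (fun s hs => (hinv s hs).2) (hN.1 _) ?_
  exact (mul_min_le_energy hl0.le hl1.le hαψ.le hαψ₀.le hψnn hψ₀nn (fun t θ => (hPE t θ).1)
    hρψ₀ t _).trans
    (energy_le_of_le_cost_at_true_param hl0.le hψsym hψGTI hψ₀sym hψ₀GTI hy hV (hmin t θc))

/-- Main ISS theorem: there is a class-K∞ function ξ (with inverse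
ξ⁻¹, also class-K∞) such that every sequence of minimizers satisfies
‖θ̂_t − θ°‖ ≤ ξ⁻¹(2λ^t ψ₀(θ̂₀−θ°) + 2 Σ_{k=1}^t λ^{t−k} ψ(v_k)). -/
theorem stmt_12 {n : ℕ} (ψ : ℝ → ℝ) (ψ₀ : (Fin n → ℝ) → ℝ) (fψ fψ₀ : ℝ → ℝ)
    (hψc : Continuous ψ) (hψnn : ∀ e, 0 ≤ ψ e)
    (hψpd : ∀ e, ψ e = 0 ↔ e = 0) (hψsym : ∀ e, ψ (-e) = ψ e)
    (αψ : ℝ) (hαψ : 0 < αψ) (hψGTI : ∀ e e' : ℝ, αψ * ψ e - ψ e' ≤ ψ (e - e'))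
    (hfψ : ClassKInf fψ)
    (hψGH : ∀ (e r : ℝ), r ≠ 0 → fψ (1 / |r|) * ψ (r * e) ≤ ψ e)
    (hψ₀c : Continuous ψ₀) (hψ₀nn : ∀ θ, 0 ≤ ψ₀ θ)
    (hψ₀pd : ∀ θ, ψ₀ θ = 0 ↔ θ = 0) (hψ₀sym : ∀ θ, ψ₀ (-θ) = ψ₀ θ)
    (αψ₀ : ℝ) (hαψ₀ : 0 < αψ₀)
    (hψ₀GTI : ∀ θ θ' : Fin n → ℝ, αψ₀ * ψ₀ θ - ψ₀ θ' ≤ ψ₀ (θ - θ'))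
    (hfψ₀ : ClassKInf fψ₀)
    (hψ₀GH : ∀ (θ : Fin n → ℝ) (r : ℝ), r ≠ 0 → fψ₀ (1 / |r|) * ψ₀ (r • θ) ≤ ψ₀ θ)
    (x : ℕ → Fin n → ℝ) (y v : ℕ → ℝ) (θc θ₀ : Fin n → ℝ)
    (hy : ∀ k : ℕ, y k = dot (x k) θc + v k)
    (N : (Fin n → ℝ) → ℝ) (hN : IsNorm N)
    (l : ℝ) (hl : l ∈ Set.Ioo (0 : ℝ) 1)
    (T : ℕ) (hT : 0 < T) (α β : ℝ → ℝ) (hα : ClassKInf α) (hβ : ClassKInf β)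
    (hPE : ∀ (t : ℕ) (θ : Fin n → ℝ),
      α (N θ) ≤ ∑ k ∈ Finset.Icc (t + 1) (t + T), ψ (dot (x k) θ) ∧
      ∑ k ∈ Finset.Icc (t + 1) (t + T), ψ (dot (x k) θ) ≤ β (N θ))
    (V : ℕ → (Fin n → ℝ) → ℝ)
    (hV : ∀ (t : ℕ) (θ : Fin n → ℝ),
      V t θ = ∑ k ∈ Finset.Icc 1 t, l ^ (t - k) * ψ (y k - dot (x k) θ) +
        l ^ t * ψ₀ (θ - θ₀)) :
    ∃ ξ ξinv : ℝ → ℝ, ClassKInf ξ ∧ ClassKInf ξinv ∧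
      (∀ s : ℝ, 0 ≤ s → ξ (ξinv s) = s ∧ ξinv (ξ s) = s) ∧
      ∀ θhat : ℕ → Fin n → ℝ,
        (∀ (t : ℕ) (θ : Fin n → ℝ), V t (θhat t) ≤ V t θ) →
        ∀ t : ℕ, N (θhat t - θc) ≤
          ξinv (2 * l ^ t * ψ₀ (θ₀ - θc) +
            2 * ∑ k ∈ Finset.Icc 1 t, l ^ (t - k) * ψ (v k)) :=
  stmt_12_general ψ ψ₀ fψ₀ hψnn hψsym αψ hαψ hψGTI hψ₀c hψ₀nn hψ₀pd hψ₀sym αψ₀ hαψ₀ hψ₀GTI hfψ₀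
    hψ₀GH x y v θc θ₀ hy N hN l hl T α β hα hPE V hV
end

section
/- Let ψ(e) = |e|^p (p > 0) and ψ₀(θ) = γ₀‖θ‖² with γ₀ > 0. Suppose the PE condition holds with α(r) = a·r^p and β(r) = b·r^p for constants a, b > 0 and horizon T. Then the function ξ(r) = min( a·α_ψ·λ^{2T−1}·r^p, (γ₀/2)·λ^{T−1}·r² ), where α_ψ = 2^{1−1/p} if 0 < p ≤ 1 and α_ψ = 2^{1−p} otherwise, is a class-K∞ function satisfying ξ(‖θ‖) ≤ G_t(θ) for all t ∈ ℕ and θ ∈ ℝⁿ, where G_t(θ) = α_ψ Σ_{k=1}^t λ^{t−k} ψ(x_kᵀθ) + (1/2) λ^t ψ₀(θ). -/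
open Finset Filter

/-- Example 1: with ψ(e)=|e|^p, ψ₀(θ)=γ₀‖θ‖² and PE bounds
α(r)=a·r^p, β(r)=b·r^p, the function
ξ(r) = min(a·α_ψ·λ^{2T−1}·r^p, (γ₀/2)·λ^{T−1}·r²) is class-K∞ and lower-bounds
G_t(θ) for all t and θ. -/
theorem stmt_19 {n : ℕ} (p : ℝ) (hp : 0 < p)
    (γ₀ : ℝ) (hγ₀ : 0 < γ₀)
    (x : ℕ → Fin n → ℝ) (N : (Fin n → ℝ) → ℝ) (hN : IsNorm N)
    (l : ℝ) (hl : l ∈ Set.Ioo (0 : ℝ) 1)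
    (T : ℕ) (hT : 0 < T) (a b : ℝ) (ha : 0 < a) (hb : 0 < b)
    (hPE : ∀ (t : ℕ) (θ : Fin n → ℝ),
      a * N θ ^ p ≤ ∑ k ∈ Finset.Icc (t + 1) (t + T), |dot (x k) θ| ^ p ∧
      ∑ k ∈ Finset.Icc (t + 1) (t + T), |dot (x k) θ| ^ p ≤ b * N θ ^ p)
    (αψ : ℝ)
    (hαψ : αψ = if p ≤ 1 then (2 : ℝ) ^ (1 - 1 / p) else (2 : ℝ) ^ (1 - p))
    (G : ℕ → (Fin n → ℝ) → ℝ)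
    (hG : ∀ (t : ℕ) (θ : Fin n → ℝ),
      G t θ = αψ * ∑ k ∈ Finset.Icc 1 t, l ^ (t - k) * |dot (x k) θ| ^ p +
        (1 / 2) * l ^ t * (γ₀ * N θ ^ 2))
    (ξ : ℝ → ℝ)
    (hξ : ∀ r : ℝ, ξ r = min (a * αψ * l ^ (2 * T - 1) * r ^ p)
        ((γ₀ / 2) * l ^ (T - 1) * r ^ 2)) :
    ClassKInf ξ ∧ ∀ (t : ℕ) (θ : Fin n → ℝ), ξ (N θ) ≤ G t θ := by
  obtain ⟨hl0, hl1⟩ := hl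
  have hαψ0 : 0 < αψ := by
    rw [hαψ]; split <;> positivity
  have hNθ : ∀ θ, 0 ≤ N θ := hN.1
  have hc1pos : 0 < a * αψ * l ^ (2 * T - 1) := by positivity
  have hc2pos : 0 < (γ₀ / 2) * l ^ (T - 1) := by positivity
  constructor
  · refine ⟨?_, ?_, ?_, ?_⟩
    · have h1 : Continuous (fun r : ℝ => a * αψ * l ^ (2 * T - 1) * r ^ p) :=
        continuous_const.mul (Real.continuous_rpow_const hp.le)
      have h2 : Continuous (fun r : ℝ => (γ₀ / 2) * l ^ (T - 1) * r ^ 2) := by continuity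
      exact (h1.min h2).continuousOn.congr (fun r _ => hξ r)
    · rw [hξ]; simp [Real.zero_rpow hp.ne']
    · intro r hr s hs hrs
      rw [hξ, hξ]
      refine lt_min (lt_of_le_of_lt (min_le_left _ _) ?_) (lt_of_le_of_lt (min_le_right _ _) ?_)
      · exact mul_lt_mul_of_pos_left (Real.rpow_lt_rpow hr hrs hp) hc1pos
      · exact mul_lt_mul_of_pos_left (pow_lt_pow_left₀ hrs hr two_ne_zero) hc2pos
    · have t1 : Tendsto (fun r : ℝ => a * αψ * l ^ (2 * T - 1) * r ^ p) atTop atTop :=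
        (tendsto_rpow_atTop hp).const_mul_atTop hc1pos
      have t2 : Tendsto (fun r : ℝ => (γ₀ / 2) * l ^ (T - 1) * r ^ 2) atTop atTop :=
        (tendsto_pow_atTop two_ne_zero).const_mul_atTop hc2pos
      rw [tendsto_atTop]
      intro c
      filter_upwards [(tendsto_atTop.1 t1) c, (tendsto_atTop.1 t2) c] with r h1 h2
      rw [hξ]
      exact le_min h1 h2
  · intro t θ
    rw [hξ, hG]
    have hNp : 0 ≤ N θ ^ p := Real.rpow_nonneg (hNθ θ) p
    have hterm : ∀ k : ℕ, 0 ≤ l ^ (t - k) * |dot (x k) θ| ^ p := by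
      intro k; positivity
    rcases le_or_gt T t with hTt | hTt
    · refine le_trans (min_le_left _ _) ?_
      obtain ⟨hPE1, _⟩ := hPE (t - T) θ
      rw [Nat.sub_add_cancel hTt] at hPE1
      have step1 : a * αψ * l ^ (2 * T - 1) * N θ ^ p ≤ αψ * l ^ (T - 1) * (a * N θ ^ p) := by
        have h1 : l ^ (2 * T - 1) ≤ l ^ (T - 1) :=
          pow_le_pow_of_le_one hl0.le hl1.le (by omega)
        nlinarith [mul_le_mul_of_nonneg_left h1 (le_of_lt (mul_pos ha hαψ0)),
          mul_le_mul_of_nonneg_right (mul_le_mul_of_nonneg_left h1 (le_of_lt (mul_pos ha hαψ0))) hNp]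
      have step2 : αψ * l ^ (T - 1) * (a * N θ ^ p) ≤
          αψ * l ^ (T - 1) * ∑ k ∈ Finset.Icc (t - T + 1) t, |dot (x k) θ| ^ p := by
        gcongr
      have step3 : αψ * l ^ (T - 1) * ∑ k ∈ Finset.Icc (t - T + 1) t, |dot (x k) θ| ^ p ≤
          αψ * ∑ k ∈ Finset.Icc (t - T + 1) t, l ^ (t - k) * |dot (x k) θ| ^ p := by
        rw [mul_assoc]
        refine mul_le_mul_of_nonneg_left ?_ hαψ0.le
        rw [Finset.mul_sum]
        refine Finset.sum_le_sum fun k hk => ?_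
        simp only [Finset.mem_Icc] at hk
        exact mul_le_mul_of_nonneg_right (pow_le_pow_of_le_one hl0.le hl1.le (by omega))
          (by positivity)
      have step4 : ∑ k ∈ Finset.Icc (t - T + 1) t, l ^ (t - k) * |dot (x k) θ| ^ p ≤
          ∑ k ∈ Finset.Icc 1 t, l ^ (t - k) * |dot (x k) θ| ^ p := by
        refine Finset.sum_le_sum_of_subset_of_nonneg (Finset.Icc_subset_Icc (by omega) le_rfl)
          (fun k _ _ => hterm k)
      have hlast : 0 ≤ (1 / 2 : ℝ) * l ^ t * (γ₀ * N θ ^ 2) := by positivity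
      calc a * αψ * l ^ (2 * T - 1) * N θ ^ p
          ≤ αψ * l ^ (T - 1) * (a * N θ ^ p) := step1
        _ ≤ αψ * l ^ (T - 1) * ∑ k ∈ Finset.Icc (t - T + 1) t, |dot (x k) θ| ^ p := step2
        _ ≤ αψ * ∑ k ∈ Finset.Icc (t - T + 1) t, l ^ (t - k) * |dot (x k) θ| ^ p := step3
        _ ≤ αψ * ∑ k ∈ Finset.Icc 1 t, l ^ (t - k) * |dot (x k) θ| ^ p := mul_le_mul_of_nonneg_left step4 hαψ0.le
        _ ≤ _ := le_add_of_nonneg_right hlast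
    · refine le_trans (min_le_right _ _) ?_
      have hsum : 0 ≤ αψ * ∑ k ∈ Finset.Icc 1 t, l ^ (t - k) * |dot (x k) θ| ^ p := by
        refine mul_nonneg hαψ0.le (Finset.sum_nonneg (fun k _ => hterm k))
      have h1 : l ^ (T - 1) ≤ l ^ t :=
        pow_le_pow_of_le_one hl0.le hl1.le (by omega)
      have : (γ₀ / 2) * l ^ (T - 1) * N θ ^ 2 ≤ (1 / 2) * l ^ t * (γ₀ * N θ ^ 2) := by
        nlinarith [sq_nonneg (N θ), mul_le_mul_of_nonneg_right h1 (sq_nonneg (N θ))]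
      linarith
end
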